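/- Let n be a positive integer and b ∈ {0,…,n}. Let VT_b(n) = {(s₁,…,s_n) ∈ {0,1}^n : ∑_{i=1}^{n} i·s_i ≡ b (mod n+1)} and W(z) = ∑_{s ∈ VT_b(n)} z^{w(s)} its weight enumerator. Then (z+1)(n+1)·W(z) = ∑_{d ∣ n+1} c_d(b)·(1 − (−z)^d)^{(n+1)/d}, where c_d(b) is the Ramanujan sum. -/

import Mathlib

open Complex Finset

/-- The Ramanujan sum `c_n(m)`. -/
noncomputable def ramanujan (n : ℕ) (m : ℤ) : ℂ :=
  ∑ j ∈ (Finset.Icc 1 n).filter fun j => Nat.gcd j n = 1,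
    Complex.exp (2 * Real.pi * Complex.I * ((j : ℂ) * m) / n)

/-- The Varshamov--Tenengolts code `VT_b(n)`. -/
def VT (n b : ℕ) : Finset (Fin n → Fin 2) :=
  Finset.univ.filter fun s => (∑ i : Fin n, (i.val + 1) * (s i).val) % (n + 1) = b

/-- Hamming weight of a binary n-tuple. -/
def wt {n : ℕ} (s : Fin n → Fin 2) : ℕ := (Finset.univ.filter fun i => s i = 1).card

lemma prod_sub (d : ℕ) (hd : 0 < d) {ζ : ℂ} (h : IsPrimitiveRoot ζ d) (Y : ℂ) :
    ∏ i ∈ range d, (Y - ζ ^ i) = Y ^ d - 1 := by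
  have h1 := congrArg (Polynomial.eval Y) (Polynomial.X_pow_sub_one_eq_prod hd h)
  simp only [Polynomial.eval_sub, Polynomial.eval_pow, Polynomial.eval_X, Polynomial.eval_one,
    Polynomial.eval_prod, Polynomial.eval_sub, Polynomial.eval_C] at h1
  rw [h1]
  have hinj : (↑(range d) : Set ℕ).InjOn (fun i => ζ ^ i) := by
    intro i hi j hj hij
    exact h.pow_inj (by simpa using hi) (by simpa using hj) hij
  have himg : (range d).image (fun i => ζ ^ i) = Polynomial.nthRootsFinset d (1 : ℂ) := by
    apply Finset.eq_of_subset_of_card_le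
    · intro x hx
      obtain ⟨i, _, rfl⟩ := Finset.mem_image.1 hx
      rw [Polynomial.mem_nthRootsFinset hd, ← pow_mul, mul_comm, pow_mul, h.pow_eq_one, one_pow]
    · rw [h.card_nthRootsFinset, Finset.card_image_of_injOn hinj, Finset.card_range]
  rw [← himg, Finset.prod_image (fun i hi j hj => hinj hi hj)]

lemma prim_prod (d : ℕ) (hd : 0 < d) {ζ : ℂ} (h : IsPrimitiveRoot ζ d) (z : ℂ) :
    ∏ i ∈ range d, (1 + z * ζ ^ i) = 1 - (-z) ^ d := by
  rcases eq_or_ne z 0 with rfl | hz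
  · simp [zero_pow hd.ne']
  · have he : ∀ i ∈ range d, (1 + z * ζ ^ i) = (-z) * ((-1/z) - ζ ^ i) := by
      intro i _; field_simp; ring
    rw [Finset.prod_congr rfl he, Finset.prod_mul_distrib, Finset.prod_const,
      prod_sub d hd h, Finset.card_range, mul_sub, ← mul_pow, mul_one]
    have hone : (-z) * (-1/z) = 1 := by field_simp
    rw [hone, one_pow]

lemma orth (m : ℕ) (hm : 0 < m) (c : ℕ) :
    ∑ k ∈ range m, Complex.exp (2*Real.pi*I/m) ^ (k * c) = if m ∣ c then (m:ℂ) else 0 := by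
  have hprim := Complex.isPrimitiveRoot_exp m hm.ne'
  set ω := Complex.exp (2*Real.pi*I/m)
  have hsum : ∀ k, ω ^ (k*c) = (ω ^ c) ^ k := fun k => by rw [mul_comm, pow_mul]
  simp_rw [hsum]
  have hiff : ω ^ c = 1 ↔ m ∣ c := hprim.pow_eq_one_iff_dvd c
  by_cases h : m ∣ c
  · simp [hiff.2 h, h]
  · have hx : ω ^ c ≠ 1 := fun hh => h (hiff.1 hh)
    rw [geom_sum_eq hx]
    have : (ω ^ c) ^ m = 1 := by
      rw [← pow_mul, mul_comm, pow_mul, hprim.pow_eq_one, one_pow]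
    rw [this]
    simp [h]

lemma prod_period (d g : ℕ) {ζ : ℂ} (hζ : ζ ^ d = 1) (f : ℂ → ℂ) :
    ∏ i ∈ range (d * g), f (ζ ^ i) = (∏ i ∈ range d, f (ζ ^ i)) ^ g := by
  induction g with
  | zero => simp
  | succ g ih =>
    rw [Nat.mul_succ, Finset.prod_range_add, ih, pow_succ]
    congr 1
    apply Finset.prod_congr rfl
    intro i _
    rw [pow_add, pow_mul, hζ, one_pow, one_mul]

lemma prod_k (m : ℕ) (hm : 0 < m) (k : ℕ) (z : ℂ) :
    ∏ i ∈ range m, (1 + z * Complex.exp (2*Real.pi*I/m) ^ (k*i)) =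
      (1 - (-z) ^ (m / Nat.gcd k m)) ^ Nat.gcd k m := by
  set g := Nat.gcd k m with hgdef
  have hg : 0 < g := Nat.gcd_pos_of_pos_right k hm
  set d := m / g with hddef
  have hdg : d * g = m := Nat.div_mul_cancel (Nat.gcd_dvd_right k m)
  have hd : 0 < d := Nat.div_pos (Nat.le_of_dvd hm (Nat.gcd_dvd_right k m)) hg
  set ζ := Complex.exp (2*Real.pi*I/m) ^ k with hzeta
  have hζ : IsPrimitiveRoot ζ d := by
    have hcop : (k / g).Coprime d := Nat.coprime_div_gcd_div_gcd hg
    have hp := Complex.isPrimitiveRoot_exp_of_coprime (k/g) d hd.ne' hcop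
    have heq : ζ = Complex.exp (2*Real.pi*I * ((k/g : ℕ) / (d : ℕ))) := by
      rw [hzeta, ← Complex.exp_nat_mul]
      congr 1
      have h1 : ((k/g : ℕ) : ℂ) * g = (k : ℂ) := by
        exact_mod_cast congrArg (Nat.cast : ℕ → ℂ) (Nat.div_mul_cancel (Nat.gcd_dvd_left k m))
      have h2 : ((d : ℕ) : ℂ) * g = (m : ℂ) := by exact_mod_cast congrArg (Nat.cast : ℕ → ℂ) hdg
      have hg0 : (g : ℂ) ≠ 0 := Nat.cast_ne_zero.2 hg.ne'
      have hm0 : (m : ℂ) ≠ 0 := Nat.cast_ne_zero.2 hm.ne'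
      have hd0 : (d : ℂ) ≠ 0 := Nat.cast_ne_zero.2 hd.ne'
      field_simp
      rw [← h1, ← h2]
      ring
    rw [heq]; exact hp
  have hexp : ∀ i, Complex.exp (2*Real.pi*I/m) ^ (k * i) = ζ ^ i := fun i => by
    rw [hzeta, ← pow_mul]
  simp_rw [hexp]
  have hζd : ζ ^ d = 1 := hζ.pow_eq_one
  calc ∏ i ∈ range m, (1 + z * ζ ^ i)
      = ∏ i ∈ range (d * g), (1 + z * ζ ^ i) := by rw [hdg]
    _ = (∏ i ∈ range d, (1 + z * ζ ^ i)) ^ g := prod_period d g hζd (fun w => 1 + z * w)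
    _ = (1 - (-z) ^ d) ^ g := by rw [prim_prod d hd hζ z]

lemma wt_eq {n : ℕ} (s : Fin n → Fin 2) : wt s = ∑ i : Fin n, (s i).val := by
  rw [wt, Finset.card_filter]
  apply Finset.sum_congr rfl
  intro i _
  have h : ∀ t : Fin 2, (if t = 1 then 1 else 0) = t.val := by decide
  exact h (s i)

lemma swap_lemma (n : ℕ) (z ω : ℂ) (k : ℕ) :
    ∑ s : Fin n → Fin 2, z ^ (∑ i : Fin n, (s i).val) * ω ^ (k * ∑ i : Fin n, (i.val + 1) * (s i).val)
      = ∏ i : Fin n, (1 + z * ω ^ (k * (i.val + 1))) := by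
  have hterm : ∀ s : Fin n → Fin 2,
      z ^ (∑ i : Fin n, (s i).val) * ω ^ (k * ∑ i : Fin n, (i.val + 1) * (s i).val)
        = ∏ i : Fin n, (z * ω ^ (k * (i.val + 1))) ^ (s i).val := by
    intro s
    rw [Finset.mul_sum Finset.univ (fun i : Fin n => (i.val + 1) * (s i).val) k]
    rw [← Finset.prod_pow_eq_pow_sum, ← Finset.prod_pow_eq_pow_sum, ← Finset.prod_mul_distrib]
    apply Finset.prod_congr rfl
    intro i _
    rw [mul_pow, ← pow_mul]
    ring_nf
  simp_rw [hterm]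
  have := Finset.prod_univ_sum (fun _ : Fin n => (Finset.univ : Finset (Fin 2)))
    (fun i t => (z * ω ^ (k * (i.val + 1))) ^ t.val)
  rw [Fintype.piFinset_univ] at this
  rw [← this]
  apply Finset.prod_congr rfl
  intro i _
  rw [Fin.sum_univ_two]
  simp

lemma coprime_sub {d j : ℕ} (hjd : j ≤ d) (h : Nat.gcd j d = 1) : Nat.gcd (d - j) d = 1 := by
  have h1 : Nat.gcd (d - j) d ∣ d - j := Nat.gcd_dvd_left _ _
  have h2 : Nat.gcd (d - j) d ∣ d := Nat.gcd_dvd_right _ _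
  have h3 : Nat.gcd (d - j) d ∣ j := by
    have := Nat.dvd_sub h2 h1
    rwa [show d - (d - j) = j by omega] at this
  have h4 : Nat.gcd (d - j) d ∣ Nat.gcd j d := Nat.dvd_gcd h3 h2
  rw [h] at h4
  exact Nat.dvd_one.mp h4

lemma regroup (m : ℕ) (hm : 0 < m) (b : ℕ) (hb : b < m) (F : ℕ → ℂ) :
    ∑ d ∈ m.divisors, ramanujan d b * F d
      = ∑ k ∈ range m, Complex.exp (2*Real.pi*I/(m:ℂ)) ^ (k * (m - b)) * F (m / Nat.gcd k m) := by
  simp only [ramanujan, Finset.sum_mul]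
  rw [Finset.sum_sigma' m.divisors (fun d => (Finset.Icc 1 d).filter fun j => Nat.gcd j d = 1)
    (fun d j => Complex.exp (2*Real.pi*I*((j:ℂ)*((b:ℤ):ℂ))/(d:ℂ)) * F d)]
  refine Finset.sum_nbij' (fun p => (p.1 - p.2) * (m / p.1))
    (fun k => ⟨m / Nat.gcd k m, m / Nat.gcd k m - k / Nat.gcd k m⟩) ?_ ?_ ?_ ?_ ?_
  · rintro ⟨d, j⟩ hp
    simp only [Finset.mem_sigma, Nat.mem_divisors, Finset.mem_filter, Finset.mem_Icc] at hp
    obtain ⟨⟨hdm, hm0⟩, ⟨hj1, hjd⟩, hcop⟩ := hp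
    have he : d * (m / d) = m := Nat.mul_div_cancel' hdm
    have he1 : 0 < m / d := Nat.div_pos (Nat.le_of_dvd hm hdm) (by omega)
    rw [Finset.mem_range]
    calc (d - j) * (m / d) < d * (m / d) := by
          apply Nat.mul_lt_mul_of_lt_of_le (by omega) (le_refl _) he1
      _ = m := he
  · intro k hk
    rw [Finset.mem_range] at hk
    have hg : 0 < Nat.gcd k m := Nat.gcd_pos_of_pos_right k hm
    have hdm : m / Nat.gcd k m ∣ m := Nat.div_dvd_of_dvd (Nat.gcd_dvd_right k m)
    have hq : k / Nat.gcd k m < m / Nat.gcd k m :=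
      Nat.div_lt_div_of_lt_of_dvd (Nat.gcd_dvd_right k m) hk
    have hcop : Nat.gcd (k / Nat.gcd k m) (m / Nat.gcd k m) = 1 :=
      Nat.coprime_div_gcd_div_gcd hg
    simp only [Finset.mem_sigma, Nat.mem_divisors, Finset.mem_filter, Finset.mem_Icc]
    exact ⟨⟨hdm, hm.ne'⟩, ⟨Nat.sub_pos_of_lt hq, Nat.sub_le _ _⟩, coprime_sub hq.le hcop⟩
  · rintro ⟨d, j⟩ hp
    simp only [Finset.mem_sigma, Nat.mem_divisors, Finset.mem_filter, Finset.mem_Icc] at hp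
    obtain ⟨⟨hdm, hm0⟩, ⟨hj1, hjd⟩, hcop⟩ := hp
    obtain ⟨e, rfl⟩ := hdm
    have hd1 : 0 < d := by omega
    have he1 : 0 < e := Nat.pos_of_ne_zero fun h => by subst h; simp at hm
    have hde : d * e / d = e := Nat.mul_div_cancel_left e hd1
    have hgcd : Nat.gcd ((d - j) * e) (d * e) = e := by
      rw [Nat.gcd_mul_right, coprime_sub hjd hcop, one_mul]
    dsimp only
    rw [hde, hgcd, Nat.mul_div_cancel _ he1, Nat.mul_div_cancel _ he1,
      show d - (d - j) = j by omega]
  · intro k hk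
    rw [Finset.mem_range] at hk
    have hg : 0 < Nat.gcd k m := Nat.gcd_pos_of_pos_right k hm
    have hq : k / Nat.gcd k m < m / Nat.gcd k m :=
      Nat.div_lt_div_of_lt_of_dvd (Nat.gcd_dvd_right k m) hk
    dsimp only
    have h1 : m / Nat.gcd k m - (m / Nat.gcd k m - k / Nat.gcd k m) = k / Nat.gcd k m :=
      Nat.sub_sub_self hq.le
    rw [h1, Nat.div_div_self (Nat.gcd_dvd_right k m) hm.ne',
      Nat.div_mul_cancel (Nat.gcd_dvd_left k m)]
  · rintro ⟨d, j⟩ hp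
    simp only [Finset.mem_sigma, Nat.mem_divisors, Finset.mem_filter, Finset.mem_Icc] at hp
    obtain ⟨⟨hdm, hm0⟩, ⟨hj1, hjd⟩, hcop⟩ := hp
    obtain ⟨e, rfl⟩ := hdm
    have hd1 : 0 < d := by omega
    have he1 : 0 < e := Nat.pos_of_ne_zero fun h => by subst h; simp at hm
    have hde : d * e / d = e := Nat.mul_div_cancel_left e hd1
    have hgcd : Nat.gcd ((d - j) * e) (d * e) = e := by
      rw [Nat.gcd_mul_right, coprime_sub hjd hcop, one_mul]
    have hb' : b ≤ d * e := le_of_lt hb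
    dsimp only
    rw [hde, hgcd, Nat.mul_div_cancel _ he1]
    congr 1
    rw [← Complex.exp_nat_mul]
    have hc : ((((d - j) * e * (d * e - b) : ℕ) : ℂ)) * (2*Real.pi*I/((d*e : ℕ):ℂ))
        = 2 * Real.pi * I * ((j : ℂ) * ((b:ℤ):ℂ)) / (d : ℂ)
          + ((((d*e : ℕ) : ℤ) - (b:ℤ) - (j:ℤ) * (e:ℤ) : ℤ) : ℂ) * (2*Real.pi*I) := by
      have hd0 : (d : ℂ) ≠ 0 := Nat.cast_ne_zero.2 hd1.ne'
      have he0 : (e : ℂ) ≠ 0 := Nat.cast_ne_zero.2 he1.ne'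
      push_cast [Nat.cast_sub hjd, Nat.cast_sub hb']
      field_simp
      ring
    rw [hc, Complex.exp_add, Complex.exp_int_mul_two_pi_mul_I, mul_one]

lemma step1 (n b : ℕ) (hb : b ≤ n) (z : ℂ) :
    (((n+1 : ℕ)):ℂ) * ∑ s ∈ VT n b, z ^ wt s
      = ∑ k ∈ range (n+1), Complex.exp (2*Real.pi*I/((n+1 : ℕ):ℂ)) ^ (k * ((n+1) - b)) *
          ∏ i : Fin n, (1 + z * Complex.exp (2*Real.pi*I/((n+1:ℕ):ℂ)) ^ (k * (i.val + 1))) := by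
  have hm : 0 < n + 1 := Nat.succ_pos n
  set ω := Complex.exp (2*Real.pi*I/((n+1 : ℕ):ℂ)) with hw
  calc (((n+1 : ℕ)):ℂ) * ∑ s ∈ VT n b, z ^ wt s
      = ∑ s ∈ VT n b, z ^ wt s * ((n+1 : ℕ):ℂ) := by
        rw [Finset.mul_sum]; exact Finset.sum_congr rfl fun s _ => mul_comm _ _
    _ = ∑ s : Fin n → Fin 2, z ^ wt s *
          (if (∑ i : Fin n, (i.val + 1) * (s i).val) % (n + 1) = b then ((n+1:ℕ):ℂ) else 0) := by
        rw [VT, Finset.sum_filter]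
        exact Finset.sum_congr rfl fun s _ => by rw [mul_ite, mul_zero]
    _ = ∑ s : Fin n → Fin 2, z ^ wt s *
          ∑ k ∈ range (n+1), ω ^ (k * ((∑ i : Fin n, (i.val + 1) * (s i).val) + ((n+1) - b))) := by
        refine Finset.sum_congr rfl fun s _ => ?_
        rw [orth (n+1) hm _]
        congr 1
        have hiff : ((∑ i : Fin n, (i.val + 1) * (s i).val) % (n + 1) = b)
            ↔ ((n+1) ∣ (∑ i : Fin n, (i.val + 1) * (s i).val) + ((n+1) - b)) := by
          set σ := ∑ i : Fin n, (i.val + 1) * (s i).val with hσ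
          have hbm : b < n + 1 := by omega
          have h1 : (σ % (n+1) = b) ↔ σ ≡ b [MOD n+1] := by
            unfold Nat.ModEq
            rw [Nat.mod_eq_of_lt hbm]
          rw [h1, ← Nat.modEq_zero_iff_dvd]
          have h2 : (n+1) ≡ 0 [MOD n+1] := Nat.modEq_zero_iff_dvd.mpr dvd_rfl
          have hsum : b + ((n+1) - b) = n + 1 := by omega
          constructor
          · intro h
            have h3 := h.add_right ((n+1) - b)
            rw [hsum] at h3
            exact h3.trans h2
          · intro h
            have h3 : σ + ((n+1) - b) ≡ b + ((n+1) - b) [MOD n+1] := by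
              rw [hsum]
              exact h.trans h2.symm
            exact h3.add_right_cancel' _
        exact if_congr hiff rfl rfl
    _ = ∑ k ∈ range (n+1), ∑ s : Fin n → Fin 2,
          z ^ wt s * ω ^ (k * ((∑ i : Fin n, (i.val + 1) * (s i).val) + ((n+1) - b))) := by
        simp_rw [Finset.mul_sum]
        rw [Finset.sum_comm]
    _ = ∑ k ∈ range (n+1), ω ^ (k * ((n+1) - b)) *
          ∏ i : Fin n, (1 + z * ω ^ (k * (i.val + 1))) := by
        refine Finset.sum_congr rfl fun k _ => ?_
        rw [← swap_lemma n z ω k, Finset.mul_sum]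
        refine Finset.sum_congr rfl fun s _ => ?_
        rw [wt_eq, mul_add, pow_add]
        ring

theorem stmt_12 (n : ℕ) (hn : 1 ≤ n) (b : ℕ) (hb : b ≤ n) (z : ℂ) :
    (z + 1) * (n + 1) * ∑ s ∈ VT n b, z ^ wt s =
      ∑ d ∈ (n + 1).divisors, ramanujan d b * (1 - (-z) ^ d) ^ ((n + 1) / d) := by
  have hm : 0 < n + 1 := Nat.succ_pos n
  have hbm : b < n + 1 := by omega
  have hcast : ((n:ℂ) + 1) = (((n+1 : ℕ)):ℂ) := by push_cast; ring
  set ω := Complex.exp (2*Real.pi*I/((n+1 : ℕ):ℂ)) with hw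
  calc (z + 1) * ((n:ℂ) + 1) * ∑ s ∈ VT n b, z ^ wt s
      = (z + 1) * ((((n+1:ℕ)):ℂ) * ∑ s ∈ VT n b, z ^ wt s) := by rw [hcast]; ring
    _ = (z + 1) * ∑ k ∈ range (n+1), ω ^ (k * ((n+1) - b)) *
          ∏ i : Fin n, (1 + z * ω ^ (k * (i.val + 1))) := by rw [step1 n b hb z]
    _ = ∑ k ∈ range (n+1), ω ^ (k * ((n+1) - b)) *
          ((z + 1) * ∏ i : Fin n, (1 + z * ω ^ (k * (i.val + 1)))) := by
        rw [Finset.mul_sum]; exact Finset.sum_congr rfl fun k _ => by ring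
    _ = ∑ k ∈ range (n+1), ω ^ (k * ((n+1) - b)) *
          (1 - (-z) ^ ((n+1) / Nat.gcd k (n+1))) ^ ((n+1) / ((n+1) / Nat.gcd k (n+1))) := by
        refine Finset.sum_congr rfl fun k _ => ?_
        congr 1
        have hstep2 : (z + 1) * ∏ i : Fin n, (1 + z * ω ^ (k * (i.val + 1)))
            = ∏ i ∈ range (n+1), (1 + z * ω ^ (k * i)) := by
          rw [Finset.prod_range_succ']
          have h0 : (1 + z * ω ^ (k * 0)) = z + 1 := by rw [mul_zero, pow_zero, mul_one]; ring
          rw [h0]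
          rw [mul_comm]
          congr 1
          rw [← Fin.prod_univ_eq_prod_range (fun i => 1 + z * ω ^ (k * (i + 1)))]
        rw [hstep2, hw, prod_k (n+1) hm k z,
          Nat.div_div_self (Nat.gcd_dvd_right k (n+1)) hm.ne']
    _ = ∑ d ∈ (n + 1).divisors, ramanujan d b * (1 - (-z) ^ d) ^ ((n + 1) / d) := by
        rw [regroup (n+1) hm b hbm (fun d => (1 - (-z) ^ d) ^ ((n+1) / d)), hw]
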